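/- Let (A,B,C,f,g) be a three-term complex in 𝒞, i.e. f : A ⟶ B, g : B ⟶ C with f ≫ g = 0. Suppose that either (a) the map Hom(A⟦1⟧, B) → Hom(A⟦1⟧, C), u ↦ u ≫ g, is surjective, or (b) the map Hom(B⟦1⟧, C) → Hom(A⟦1⟧, C), v ↦ f⟦1⟧ ≫ v, is surjective. Then any two convolutions of the complex are isomorphic: if each of Z₁ and Z₂ is a convolution of some right Postnikov system or of some left Postnikov system associated to (A,B,C,f,g), then Z₁ ≅ Z₂. -/

import Mathlib

open CategoryTheory Category Limits Pretriangulated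

variable {𝒞 : Type*} [Category 𝒞] [HasZeroObject 𝒞] [HasShift 𝒞 ℤ] [Preadditive 𝒞]
  [∀ n : ℤ, (CategoryTheory.shiftFunctor 𝒞 n).Additive] [Pretriangulated 𝒞]

/-- `Z` is a convolution of some right Postnikov system associated to the three-term
complex `A ⟶f B ⟶g C`: there are a distinguished triangle `B ⟶g C ⟶h X ⟶i B⟦1⟧` and a
morphism `j : A⟦1⟧ ⟶ X` with `j ≫ i = f⟦1⟧` such that `Z` is a cone of `j`. -/
def IsRightPostnikovConvolution {A B C : 𝒞} (f : A ⟶ B) (g : B ⟶ C) (Z : 𝒞) : Prop :=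
  ∃ (X : 𝒞) (h : C ⟶ X) (i : X ⟶ B⟦(1 : ℤ)⟧) (j : A⟦(1 : ℤ)⟧ ⟶ X)
    (p : X ⟶ Z) (q : Z ⟶ A⟦(1 : ℤ)⟧⟦(1 : ℤ)⟧),
    (Triangle.mk g h i ∈ distTriang 𝒞) ∧ j ≫ i = f⟦(1 : ℤ)⟧' ∧
    Triangle.mk j p q ∈ distTriang 𝒞

/-- `Z` is a convolution of some left Postnikov system associated to the three-term
complex `A ⟶f B ⟶g C`: there are a distinguished triangle `A ⟶f B ⟶k Y ⟶l A⟦1⟧` and a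
morphism `m : Y ⟶ C` with `k ≫ m = g` such that `Z` is a cone of `m`. -/
def IsLeftPostnikovConvolution {A B C : 𝒞} (f : A ⟶ B) (g : B ⟶ C) (Z : 𝒞) : Prop :=
  ∃ (Y : 𝒞) (k : B ⟶ Y) (l : Y ⟶ A⟦(1 : ℤ)⟧) (m : Y ⟶ C)
    (p : C ⟶ Z) (q : Z ⟶ Y⟦(1 : ℤ)⟧),
    (Triangle.mk f k l ∈ distTriang 𝒞) ∧ k ≫ m = g ∧
    Triangle.mk m p q ∈ distTriang 𝒞

/-! A left Postnikov system can be turned into a right one with the same convolution by the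
octahedral axiom, so it suffices to compare two right systems `(h₁, i₁, j₁)` and `(h₂, i₂, j₂)`.
Their triangles on `g` are related by some morphism `e` fixing `B` and `C`, automatically an
isomorphism, and `j₂ - j₁ ≫ e` factors as `c ≫ h₂` with `c : A⟦1⟧ ⟶ C`. If `c = u ≫ g` this
difference vanishes; if `c = f⟦1⟧' ≫ v`, the correction `e + i₁ ≫ v ≫ h₂` is still such a morphism
and carries `j₁` to `j₂`. The cones of `j₁` and `j₂` are then isomorphic. -/

lemma mk_neg₂₃_mem_distTriang {X Y Z : 𝒞} {a : X ⟶ Y} {b : Y ⟶ Z} {c : Z ⟶ X⟦(1 : ℤ)⟧}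
    (hT : Triangle.mk a b c ∈ distTriang 𝒞) :
    Triangle.mk a (-b) (-c) ∈ distTriang 𝒞 :=
  have neg_id_comp_neg_id : (-𝟙 Z) ≫ (-𝟙 Z) = 𝟙 Z := by simp
  isomorphic_distinguished _ hT _ <|
    Triangle.isoMk _ _ (Iso.refl X) (Iso.refl Y)
      ⟨-𝟙 Z, -𝟙 Z, neg_id_comp_neg_id, neg_id_comp_neg_id⟩
      (show a ≫ 𝟙 Y = 𝟙 X ≫ a by simp) (show (-b) ≫ (-𝟙 Z) = 𝟙 Y ≫ b by simp)
      (show (-c) ≫ (𝟙 X)⟦(1 : ℤ)⟧' = (-𝟙 Z) ≫ c by simp)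

lemma IsLeftPostnikovConvolution.isRightPostnikovConvolution [IsTriangulated 𝒞]
    {A B C Z : 𝒞} {f : A ⟶ B} {g : B ⟶ C}
    (h : IsLeftPostnikovConvolution f g Z) : IsRightPostnikovConvolution f g Z := by
  obtain ⟨Y, k, l, m, p, q, hY, hkm, hZ⟩ := h
  obtain ⟨X, h, i, hX⟩ := distinguished_cocone_triangle g
  -- with this sign the octahedron gives `m₁ ≫ i = f⟦1⟧'` on the nose
  have hY' : Triangle.mk k (-l) (f⟦(1 : ℤ)⟧') ∈ distTriang 𝒞 := by
    have := mk_neg₂₃_mem_distTriang (a := k) (b := l) (c := -f⟦(1 : ℤ)⟧') (rot_of_distTriang _ hY)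
    rwa [neg_neg] at this
  let oct := Triangulated.someOctahedron hkm hY' hZ hX
  exact ⟨X, h, i, oct.m₁, oct.m₃, _, hX, oct.comm₂, oct.mem⟩

section TrianglesOnG

variable {A B C X₁ X₂ : 𝒞} {f : A ⟶ B} {g : B ⟶ C}
  {h₁ : C ⟶ X₁} {i₁ : X₁ ⟶ B⟦(1 : ℤ)⟧} {h₂ : C ⟶ X₂} {i₂ : X₂ ⟶ B⟦(1 : ℤ)⟧}

lemma exists_hom_comp_eq_and_comp_eq (hT₁ : Triangle.mk g h₁ i₁ ∈ distTriang 𝒞)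
    (hT₂ : Triangle.mk g h₂ i₂ ∈ distTriang 𝒞) :
    ∃ e : X₁ ⟶ X₂, h₁ ≫ e = h₂ ∧ e ≫ i₂ = i₁ := by
  obtain ⟨e, he₁, he₂⟩ := complete_distinguished_triangle_morphism _ _ hT₁ hT₂ (𝟙 B) (𝟙 C)
    (show g ≫ 𝟙 C = 𝟙 B ≫ g by simp)
  change X₁ ⟶ X₂ at e
  replace he₁ : h₁ ≫ e = 𝟙 C ≫ h₂ := he₁
  replace he₂ : i₁ ≫ (𝟙 B)⟦(1 : ℤ)⟧' = e ≫ i₂ := he₂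
  exact ⟨e, by simpa using he₁, by simpa using he₂.symm⟩

lemma isIso_of_comp_eq_of_comp_eq (hT₁ : Triangle.mk g h₁ i₁ ∈ distTriang 𝒞)
    (hT₂ : Triangle.mk g h₂ i₂ ∈ distTriang 𝒞) {e : X₁ ⟶ X₂}
    (he₁ : h₁ ≫ e = h₂) (he₂ : e ≫ i₂ = i₁) : IsIso e := by
  let φ : Triangle.mk g h₁ i₁ ⟶ Triangle.mk g h₂ i₂ := Triangle.homMk _ _ (𝟙 B) (𝟙 C) e
    (show g ≫ 𝟙 C = 𝟙 B ≫ g by simp) (show h₁ ≫ e = 𝟙 C ≫ h₂ by simpa using he₁)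
    (show i₁ ≫ (𝟙 B)⟦(1 : ℤ)⟧' = e ≫ i₂ by simpa using he₂.symm)
  exact isIso₃_of_isIso₁₂ φ hT₁ hT₂ (IsIso.id B) (IsIso.id C)

lemma exists_comp_eq_add_comp (hT₂ : Triangle.mk g h₂ i₂ ∈ distTriang 𝒞) {e : X₁ ⟶ X₂}
    (he : e ≫ i₂ = i₁) {j₁ : A⟦(1 : ℤ)⟧ ⟶ X₁} {j₂ : A⟦(1 : ℤ)⟧ ⟶ X₂}
    (hj₁ : j₁ ≫ i₁ = f⟦(1 : ℤ)⟧') (hj₂ : j₂ ≫ i₂ = f⟦(1 : ℤ)⟧') :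
    ∃ c : A⟦(1 : ℤ)⟧ ⟶ C, j₂ = j₁ ≫ e + c ≫ h₂ := by
  obtain ⟨c, hc⟩ : ∃ c : A⟦(1 : ℤ)⟧ ⟶ C, j₂ - j₁ ≫ e = c ≫ h₂ :=
    Triangle.coyoneda_exact₃ _ hT₂ (j₂ - j₁ ≫ e)
      (show (j₂ - j₁ ≫ e) ≫ i₂ = 0 by rw [Preadditive.sub_comp, assoc, he, hj₁, hj₂, sub_self])
  exact ⟨c, by rw [← hc, add_sub_cancel]⟩

lemma exists_iso_comp_eq_of_surjective
    (hsurj : Function.Surjective (fun u : A⟦(1 : ℤ)⟧ ⟶ B => u ≫ g) ∨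
      Function.Surjective (fun v : B⟦(1 : ℤ)⟧ ⟶ C => f⟦(1 : ℤ)⟧' ≫ v))
    (hT₁ : Triangle.mk g h₁ i₁ ∈ distTriang 𝒞) (hT₂ : Triangle.mk g h₂ i₂ ∈ distTriang 𝒞)
    {j₁ : A⟦(1 : ℤ)⟧ ⟶ X₁} {j₂ : A⟦(1 : ℤ)⟧ ⟶ X₂}
    (hj₁ : j₁ ≫ i₁ = f⟦(1 : ℤ)⟧') (hj₂ : j₂ ≫ i₂ = f⟦(1 : ℤ)⟧') :
    ∃ e : X₁ ≅ X₂, j₁ ≫ e.hom = j₂ := by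
  suffices ∃ e : X₁ ⟶ X₂, h₁ ≫ e = h₂ ∧ e ≫ i₂ = i₁ ∧ j₁ ≫ e = j₂ by
    obtain ⟨e, he₁, he₂, he₃⟩ := this
    have := isIso_of_comp_eq_of_comp_eq hT₁ hT₂ he₁ he₂
    exact ⟨asIso e, he₃⟩
  obtain ⟨e, he₁, he₂⟩ := exists_hom_comp_eq_and_comp_eq hT₁ hT₂
  obtain ⟨c, hc⟩ := exists_comp_eq_add_comp hT₂ he₂ hj₁ hj₂
  rcases hsurj with hsurj | hsurj
  · obtain ⟨u, rfl⟩ := hsurj c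
    have hgh₂ : g ≫ h₂ = 0 := comp_distTriang_mor_zero₁₂ _ hT₂
    exact ⟨e, he₁, he₂, by rw [hc, assoc, hgh₂, comp_zero, add_zero]⟩
  · obtain ⟨v, rfl⟩ := hsurj c
    have hhi₁ : h₁ ≫ i₁ = 0 := comp_distTriang_mor_zero₂₃ _ hT₁
    have hhi₂ : h₂ ≫ i₂ = 0 := comp_distTriang_mor_zero₂₃ _ hT₂
    refine ⟨e + i₁ ≫ v ≫ h₂, ?_, ?_, ?_⟩
    · rw [Preadditive.comp_add, he₁, reassoc_of% hhi₁, zero_comp, add_zero]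
    · rw [Preadditive.add_comp, he₂, assoc, assoc, hhi₂, comp_zero, comp_zero, add_zero]
    · rw [Preadditive.comp_add, reassoc_of% hj₁, hc, assoc]

end TrianglesOnG

lemma IsRightPostnikovConvolution.nonempty_iso {A B C Z₁ Z₂ : 𝒞} {f : A ⟶ B} {g : B ⟶ C}
    (hsurj : Function.Surjective (fun u : A⟦(1 : ℤ)⟧ ⟶ B => u ≫ g) ∨
      Function.Surjective (fun v : B⟦(1 : ℤ)⟧ ⟶ C => f⟦(1 : ℤ)⟧' ≫ v))
    (h₁ : IsRightPostnikovConvolution f g Z₁) (h₂ : IsRightPostnikovConvolution f g Z₂) :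
    Nonempty (Z₁ ≅ Z₂) := by
  obtain ⟨X₁, h₁, i₁, j₁, p₁, q₁, hX₁, hj₁, hZ₁⟩ := h₁
  obtain ⟨X₂, h₂, i₂, j₂, p₂, q₂, hX₂, hj₂, hZ₂⟩ := h₂
  obtain ⟨e, he⟩ := exists_iso_comp_eq_of_surjective hsurj hX₁ hX₂ hj₁ hj₂
  obtain ⟨φ, -⟩ := exists_iso_of_arrow_iso _ _ hZ₁ hZ₂
    (Arrow.isoMk' j₁ j₂ (Iso.refl _) e (by rw [Iso.refl_hom, id_comp, he]))
  exact ⟨Triangle.π₃.mapIso φ⟩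

theorem convolutions_iso_of_surjective_general [IsTriangulated 𝒞]
    {A B C : 𝒞} (f : A ⟶ B) (g : B ⟶ C)
    (hsurj : Function.Surjective (fun u : A⟦(1 : ℤ)⟧ ⟶ B => u ≫ g) ∨
      Function.Surjective (fun v : B⟦(1 : ℤ)⟧ ⟶ C => f⟦(1 : ℤ)⟧' ≫ v))
    {Z₁ Z₂ : 𝒞}
    (h₁ : IsRightPostnikovConvolution f g Z₁ ∨ IsLeftPostnikovConvolution f g Z₁)
    (h₂ : IsRightPostnikovConvolution f g Z₂ ∨ IsLeftPostnikovConvolution f g Z₂) :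
    Nonempty (Z₁ ≅ Z₂) :=
  (h₁.elim id IsLeftPostnikovConvolution.isRightPostnikovConvolution).nonempty_iso hsurj
    (h₂.elim id IsLeftPostnikovConvolution.isRightPostnikovConvolution)

/-- If either post-composition with `g` is surjective as a map
`Hom(A⟦1⟧, B) → Hom(A⟦1⟧, C)`, or pre-composition with `f⟦1⟧` is surjective as a map
`Hom(B⟦1⟧, C) → Hom(A⟦1⟧, C)`, then any two convolutions (of right or left Postnikov
systems) of the three-term complex `A ⟶f B ⟶g C` are isomorphic. -/
theorem convolutions_iso_of_surjective [IsTriangulated 𝒞]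
    {A B C : 𝒞} (f : A ⟶ B) (g : B ⟶ C) (hfg : f ≫ g = 0)
    (hsurj : Function.Surjective (fun u : A⟦(1 : ℤ)⟧ ⟶ B => u ≫ g) ∨
      Function.Surjective (fun v : B⟦(1 : ℤ)⟧ ⟶ C => f⟦(1 : ℤ)⟧' ≫ v))
    {Z₁ Z₂ : 𝒞}
    (h₁ : IsRightPostnikovConvolution f g Z₁ ∨ IsLeftPostnikovConvolution f g Z₁)
    (h₂ : IsRightPostnikovConvolution f g Z₂ ∨ IsLeftPostnikovConvolution f g Z₂) :
    Nonempty (Z₁ ≅ Z₂) :=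
  convolutions_iso_of_surjective_general f g hsurj h₁ h₂
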